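/- The number of S-Motzkin paths of length 3n equals (1/(2n+1)) * binomial(3n, n), the number of ternary trees with n nodes. -/

import Mathlib

/-- The three step types of a Motzkin path: H = (1,0), U = (1,1), D = (1,-1). -/
inductive Step : Type | H | U | D
deriving DecidableEq, Repr

/-- Between every two consecutive H steps there is exactly one U step. -/
def OneUBetweenH (w : List Step) : Prop :=
  ∀ p mid s : List Step, w = p ++ Step.H :: mid ++ Step.H :: s →
    Step.H ∉ mid → mid.count Step.U = 1

/-- The k-th D step occurs after at least k H steps and at least k U steps. -/
def DCond (w : List Step) : Prop :=
  ∀ p s : List Step, w = p ++ Step.D :: s →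
    p.count Step.D + 1 ≤ p.count Step.H ∧ p.count Step.D + 1 ≤ p.count Step.U

/-- A Motzkin path: every prefix has #U ≥ #D, and the total height is 0. -/
def IsMotzkin (w : List Step) : Prop :=
  w.count Step.U = w.count Step.D ∧
  ∀ p : List Step, p <+: w → p.count Step.D ≤ p.count Step.U

/-- An S-Motzkin path of length 3n (original definition): a Motzkin path with n steps
of each type, starting with H, with exactly one U between consecutive H steps,
and where the k-th D occurs after at least k H steps and k U steps. -/
def IsSMotzkin (n : ℕ) (w : List Step) : Prop :=
  IsMotzkin w ∧ w.count Step.H = n ∧ w.count Step.U = n ∧ w.count Step.D = n ∧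
  (w ≠ [] → w.head? = some Step.H) ∧ OneUBetweenH w ∧ DCond w


/-!
An S-Motzkin path is determined by where its D steps stand: the remaining steps are forced to
read `HUHU⋯HU`, and the conditions on the D steps say precisely that the D-pattern is a ballot
word with `2n` letters `false` (non-D) and `n` letters `true` (D), i.e. every prefix has at least
twice as many `false`s as `true`s. Removing the last letter gives the ballot recursion, whose
solution is `(x + 1 - 2y) / (x + 1) * C(x + y, y)`; at `x = 2n`, `y = n` this is
`C(3n, n) / (2n + 1)`.
-/

open List

def IsBallot (l : List Bool) : Prop :=
  ∀ p, p <+: l → 2 * p.count true ≤ p.count false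

theorem isBallot_append_false {l : List Bool} : IsBallot (l ++ [false]) ↔ IsBallot l := by
  refine ⟨fun h p hp => h p (hp.trans (prefix_append l _)), fun h p hp => ?_⟩
  rcases prefix_concat_iff.1 hp with rfl | hp
  · have := h l (prefix_refl l)
    simp
    omega
  · exact h p hp

theorem isBallot_append_true {l : List Bool} :
    IsBallot (l ++ [true]) ↔ IsBallot l ∧ 2 * (l.count true + 1) ≤ l.count false := by
  refine ⟨fun h => ⟨fun p hp => h p (hp.trans (prefix_append l _)), ?_⟩,
    fun ⟨h, hl⟩ p hp => ?_⟩
  · simpa using h _ (prefix_refl _)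
  · rcases prefix_concat_iff.1 hp with rfl | hp
    · simpa using hl
    · exact h p hp

def ballotWords : ℕ → ℕ → Finset (List Bool)
  | x, 0 => {replicate x false}
  | 0, _ + 1 => ∅
  | x + 1, y + 1 => (ballotWords x (y + 1)).image (· ++ [false]) ∪
      if 2 * (y + 1) ≤ x + 1 then (ballotWords (x + 1) y).image (· ++ [true]) else ∅

theorem mem_ballotWords : ∀ {x y : ℕ} {l : List Bool},
    l ∈ ballotWords x y ↔ l.count false = x ∧ l.count true = y ∧ IsBallot l
  | x, 0, l => by
    rw [ballotWords, Finset.mem_singleton]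
    constructor
    · rintro rfl
      refine ⟨by simp, by simp [count_replicate], fun p hp => ?_⟩
      have := hp.sublist.count_le true
      simp [count_replicate] at this
      omega
    · rintro ⟨hx, h0, -⟩
      rw [eq_replicate_iff, ← count_false_add_count_true, hx, h0]
      simp_all [count_eq_zero]
  | 0, y + 1, l => by
    simp only [ballotWords, Finset.notMem_empty, false_iff, not_and]
    intro h0 hy hb
    have := hb l (prefix_refl l)
    omega
  | x + 1, y + 1, l => by
    have ih₁ := @mem_ballotWords x (y + 1)
    have ih₂ := @mem_ballotWords (x + 1) y
    rw [ballotWords]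
    rcases l.eq_nil_or_concat' with rfl | ⟨a, (_ | _), rfl⟩ <;> split_ifs <;>
      simp [ih₁, ih₂, isBallot_append_false, isBallot_append_true] <;> omega
termination_by x y => (x, y)

theorem card_ballotWords_succ_succ (x y : ℕ) :
    (ballotWords (x + 1) (y + 1)).card = (ballotWords x (y + 1)).card +
      if 2 * (y + 1) ≤ x + 1 then (ballotWords (x + 1) y).card else 0 := by
  have hinj (b : Bool) : Function.Injective (· ++ [b]) := append_left_injective [b]
  rw [ballotWords, Finset.card_union_of_disjoint, Finset.card_image_of_injective _ (hinj _)]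
  · split_ifs
    · rw [Finset.card_image_of_injective _ (hinj _)]
    · rfl
  · split_ifs
    · simp [Finset.disjoint_left]
    · exact Finset.disjoint_empty_right _

theorem succ_mul_card_ballotWords : ∀ x y : ℕ,
    (x + 1) * (ballotWords x y).card = (x + 1 - 2 * y) * (x + y).choose y
  | x, 0 => by simp [ballotWords]
  | 0, y + 1 => by simp [ballotWords]; omega
  | x + 1, y + 1 => by
    have ih₁ := succ_mul_card_ballotWords x (y + 1)
    have ih₂ := succ_mul_card_ballotWords (x + 1) y
    have hsucc := Nat.choose_succ_right_eq (x + y + 1) y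
    have hpascal := Nat.choose_succ_succ' (x + y + 1) y
    rw [card_ballotWords_succ_succ]
    split_ifs with h
    · rw [show x + 1 + (y + 1) = x + y + 1 + 1 by ring, hpascal]
      rw [show x + (y + 1) = x + y + 1 by ring] at ih₁
      rw [show x + 1 + y = x + y + 1 by ring] at ih₂
      rw [show x + y + 1 - y = x + 1 by omega] at hsucc
      zify [h, (by omega : 2 * y ≤ x + 1 + 1), (by omega : 2 * (y + 1) ≤ x + 1 + 1)] at *
      -- times `x + 1`: Pascal's rule plus `C(x+y+1, y+1) (y+1) = C(x+y+1, y) (x+1)`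
      refine mul_left_cancel₀ (by omega : (x + 1 : ℤ) ≠ 0) ?_
      linear_combination (↑x + 2) * ih₁ + (↑x + 1) * ih₂ - 2 * hsucc
    · rw [Nat.sub_eq_zero_of_le (by omega : x + 1 ≤ 2 * (y + 1)), zero_mul] at ih₁
      rw [Nat.sub_eq_zero_of_le (by omega : x + 1 + 1 ≤ 2 * (y + 1))]
      simpa using ih₁
termination_by x y => (x, y)

namespace Step

def isD : Step → Bool
  | D => true
  | _ => false

@[simp] theorem isD_H : H.isD = false := rfl
@[simp] theorem isD_U : U.isD = false := rfl
@[simp] theorem isD_D : D.isD = true := rfl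

end Step

open Step

@[simp] theorem count_true_map_isD (w : List Step) : (w.map isD).count true = w.count D := by
  induction w with
  | nil => rfl
  | cons x w ih => cases x <;> simp [ih]

@[simp] theorem count_false_map_isD (w : List Step) :
    (w.map isD).count false = w.count H + w.count U := by
  induction w with
  | nil => rfl
  | cons x w ih => cases x <;> simp [ih] <;> omega

def altHU : ℕ → List Step
  | 0 => []
  | n + 1 => H :: U :: altHU n

@[simp] theorem count_H_altHU (n : ℕ) : (altHU n).count H = n := by
  induction n with
  | zero => rfl
  | succ n ih => simp [altHU, ih]

@[simp] theorem count_U_altHU (n : ℕ) : (altHU n).count U = n := by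
  induction n with
  | zero => rfl
  | succ n ih => simp [altHU, ih]

@[simp] theorem length_altHU (n : ℕ) : (altHU n).length = 2 * n := by
  induction n with
  | zero => rfl
  | succ n ih => simp [altHU, ih]; ring

theorem D_not_mem_altHU (n : ℕ) : D ∉ altHU n := by
  induction n with
  | zero => simp [altHU]
  | succ n ih => simp [altHU, ih]

theorem count_filter_not_isD {a : Step} (ha : a ≠ D) (w : List Step) :
    (w.filter (!·.isD)).count a = w.count a :=
  count_filter (by cases a <;> simp_all)

def IsHUBalanced (w : List Step) : Prop :=
  ∀ p, p <+: w → p.count U ≤ p.count H ∧ p.count H ≤ p.count U + 1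

theorem isHUBalanced_altHU (n : ℕ) : IsHUBalanced (altHU n) := by
  induction n with
  | zero => simp [IsHUBalanced, altHU]
  | succ n ih =>
    intro p hp
    rcases prefix_cons_iff.1 hp with rfl | ⟨t, rfl, ht⟩
    · simp
    rcases prefix_cons_iff.1 ht with rfl | ⟨r, rfl, hr⟩
    · simp
    have := ih r hr
    simp
    omega

theorem IsHUBalanced.of_filter {w : List Step} (h : IsHUBalanced (w.filter (!·.isD))) :
    IsHUBalanced w := fun p hp => by
  simpa only [count_filter_not_isD (by decide : H ≠ D),
    count_filter_not_isD (by decide : U ≠ D)] using h _ (hp.filter _)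

theorem IsHUBalanced.oneUBetweenH {w : List Step} (h : IsHUBalanced w) : OneUBetweenH w := by
  rintro p mid s rfl hmid
  have h₁ := h (p ++ [H]) ⟨mid ++ H :: s, by simp⟩
  have h₂ := h (p ++ H :: mid) ⟨H :: s, by simp⟩
  have h₃ := h (p ++ H :: mid ++ [H]) ⟨s, by simp⟩
  have h₄ := h p ⟨H :: mid ++ H :: s, by simp⟩
  simp [count_eq_zero.2 hmid] at h₁ h₂ h₃
  omega

theorem OneUBetweenH.of_append {a b : List Step} (h : OneUBetweenH (a ++ b)) : OneUBetweenH b :=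
  fun p mid s hb hmid => h (a ++ p) mid s (by simp [hb]) hmid

theorem filter_not_isD_eq_singleton {m : List Step} (hH : H ∉ m) (hU : m.count U = 1) :
    m.filter (!·.isD) = [U] := by
  have hall : ∀ b ∈ m.filter (!·.isD), b = U := by
    intro b hb
    cases b <;> simp_all
  have hlen := count_filter_not_isD (by decide : U ≠ D) m
  rw [hU, count_eq_length.2 fun b hb => (hall b hb).symm] at hlen
  exact eq_replicate_iff.2 ⟨hlen, hall⟩

theorem filter_not_isD_eq_altHU {n : ℕ} {w : List Step} (hhead : w ≠ [] → w.head? = some H)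
    (hw : OneUBetweenH w) (hH : w.count H = n) (hU : w.count U = n) :
    w.filter (!·.isD) = altHU n := by
  induction n generalizing w with
  | zero =>
    obtain rfl : w = [] := by
      by_contra hne
      exact absurd hH (count_pos_iff.2 (mem_of_mem_head? (hhead hne))).ne'
    rfl
  | succ n ih =>
    obtain ⟨t, rfl⟩ : ∃ t, w = H :: t := by
      cases w with
      | nil => simp at hH
      | cons x t => exact ⟨t, by simpa using hhead⟩
    simp only [count_cons_self, count_cons_of_ne (by decide : H ≠ U)] at hH hU
    by_cases hHt : H ∈ t
    · obtain ⟨m, s, rfl, hm⟩ := eq_append_cons_of_mem hHt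
      have hmU : m.count U = 1 := hw [] m s (by simp) hm
      have hs := ih (w := H :: s) (by simp) (hw.of_append (a := H :: m) (b := H :: s))
        (by simp [count_eq_zero.2 hm] at hH ⊢; omega) (by simp [hmU] at hU ⊢; omega)
      simp [filter_not_isD_eq_singleton hm hmU, hs, altHU]
    · obtain rfl : n = 0 := by simpa [count_eq_zero.2 hHt] using hH.symm
      simp [filter_not_isD_eq_singleton hHt hU, altHU]

theorem DCond.isBallot_map_isD {w : List Step} (h : DCond w) : IsBallot (w.map isD) := by
  intro p hp
  obtain ⟨q, hq, rfl⟩ := prefix_map_iff.1 hp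
  clear hp
  simp only [count_true_map_isD, count_false_map_isD]
  induction q using reverseRecOn with
  | nil => simp
  | append_singleton q x ih =>
    have := ih ((prefix_append q [x]).trans hq)
    cases x
    · simp; omega
    · simp; omega
    · obtain ⟨s, hs⟩ := hq
      have := h q s (by simp [← hs])
      simp
      omega

def decode : List Step → List Bool → List Step
  | _, [] => []
  | st, true :: l => D :: decode st l
  | [], false :: _ => []
  | a :: st, false :: l => a :: decode st l

theorem decode_filter_map_isD (w : List Step) : decode (w.filter (!·.isD)) (w.map isD) = w := by
  induction w with
  | nil => rfl
  | cons x w ih => cases x <;> simp [decode, ih]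

theorem map_isD_decode {st : List Step} {l : List Bool} (hst : D ∉ st)
    (hl : l.count false ≤ st.length) : (decode st l).map isD = l := by
  induction l generalizing st with
  | nil => simp [decode]
  | cons b l ih =>
    cases b
    · obtain ⟨a, st, rfl⟩ := exists_cons_of_length_pos (l := st) <| by
        rw [count_cons_self] at hl
        omega
      simp at hst
      cases a <;> simp_all [decode]
    · simp_all [decode]

theorem filter_not_isD_decode {st : List Step} {l : List Bool} (hst : D ∉ st)
    (hl : l.count false = st.length) : (decode st l).filter (!·.isD) = st := by
  induction l generalizing st with
  | nil => simp_all [decode, eq_comm]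
  | cons b l ih =>
    cases b
    · obtain ⟨a, st, rfl⟩ := exists_cons_of_length_pos (l := st) <| by
        rw [count_cons_self] at hl
        omega
      simp at hst
      cases a <;> simp_all [decode]
    · simp_all [decode]

theorem isSMotzkin_iff {n : ℕ} {w : List Step} :
    IsSMotzkin n w ↔ w.filter (!·.isD) = altHU n ∧ w.map isD ∈ ballotWords (2 * n) n := by
  rw [mem_ballotWords, count_false_map_isD, count_true_map_isD]
  constructor
  · rintro ⟨-, hH, hU, hD, hhead, hw, hd⟩
    exact ⟨filter_not_isD_eq_altHU hhead hw hH hU, by omega, hD, hd.isBallot_map_isD⟩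
  · rintro ⟨hf, -, hD, hb⟩
    have hH : w.count H = n := by rw [← count_filter_not_isD (by decide), hf, count_H_altHU]
    have hU : w.count U = n := by rw [← count_filter_not_isD (by decide), hf, count_U_altHU]
    have hbal : IsHUBalanced w := .of_filter (hf ▸ isHUBalanced_altHU n)
    have hb' : ∀ p, p <+: w → 2 * p.count D ≤ p.count H + p.count U := fun p hp => by
      simpa using hb _ (hp.map isD)
    refine ⟨⟨by omega, fun p hp => ?_⟩, hH, hU, hD, fun hne => ?_, hbal.oneUBetweenH, ?_⟩
    · have := hbal p hp
      have := hb' p hp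
      omega
    · obtain ⟨x, t, rfl⟩ := exists_cons_of_ne_nil hne
      have h₁ := hbal [x] ⟨t, rfl⟩
      have h₂ := hb' [x] ⟨t, rfl⟩
      cases x <;> simp at h₁ h₂ ⊢
    · intro p s hw
      have := hbal p ⟨D :: s, hw.symm⟩
      have := hb' (p ++ [D]) ⟨s, by simp [hw]⟩
      simp at this
      omega

def sMotzkinEquivBallotWords (n : ℕ) : {w // IsSMotzkin n w} ≃ ballotWords (2 * n) n where
  toFun w := ⟨w.1.map isD, (isSMotzkin_iff.1 w.2).2⟩
  invFun l := ⟨decode (altHU n) l, by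
    have hl : l.1.count false = (altHU n).length := by simp [(mem_ballotWords.1 l.2).1]
    rw [isSMotzkin_iff, filter_not_isD_decode (D_not_mem_altHU n) hl,
      map_isD_decode (D_not_mem_altHU n) hl.le]
    exact ⟨rfl, l.2⟩⟩
  left_inv w := Subtype.ext <| by
    simpa only [(isSMotzkin_iff.1 w.2).1] using decode_filter_map_isD w.1
  right_inv l := Subtype.ext <|
    map_isD_decode (D_not_mem_altHU n) (by simp [(mem_ballotWords.1 l.2).1])

theorem smotzkin_count (n : ℕ) :
    Nat.card {w : List Step // IsSMotzkin n w} = (3 * n).choose n / (2 * n + 1) := by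
  have h := succ_mul_card_ballotWords (2 * n) n
  rw [show 2 * n + 1 - 2 * n = 1 by omega, show 2 * n + n = 3 * n by ring, one_mul] at h
  rw [Nat.card_congr (sMotzkinEquivBallotWords n), Nat.card_eq_finsetCard, ← h,
    Nat.mul_div_cancel_left _ (by omega)]
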